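/- Suppose that for the solution ({x_n},{y_n}) there exist constants M1, M2 > 0 such that M1·y_n ≤ x_n ≤ M2·y_n for all n ∈ ℕ. Suppose q = 0, and that one of the following holds: (i) A = 0, I_B ∪ I_C ⊆ I_β ∪ I_γ, and I_D ≠ ∅; (ii) α > 0, A > 0, I_B ∪ I_C ⊆ I_β ∪ I_γ, and I_D ≠ ∅; (iii) I_D ∪ I_E ⊆ I_δ ∪ I_ε and I_E ≠ ∅. Suppose further there exists a positive integer η such that for every sequence {c_m}_{m=1}^∞ with c_m ∈ I_δ ∪ I_ε for all m, there exist positive integers N1 ≤ N2 ≤ η with Σ_{m=N1}^{N2} c_m ∈ I_D ∪ I_E. Then there exist M > 0 and N ∈ ℕ such that x_n ≤ M and y_n ≤ M for all n > N. -/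
import Mathlib


open Finset

/-- The index set of the coefficient function `f` on `{1, …, k}`:
the set of indices `i ∈ {1, …, k}` with `f i > 0`. -/
noncomputable def indexSet (k : ℕ) (f : ℕ → ℝ) : Finset ℕ :=
  (Finset.Icc 1 k).filter fun i => 0 < f i

/-- The iteration condition: for every sequence `c` (indexed by `1, 2, …`)
taking values in `S`, there exist positive integers `N1 ≤ N2 ≤ η` such that
`∑_{m=N1}^{N2} c m ∈ T`. -/
def iterCond (η : ℕ) (S T : Finset ℕ) : Prop :=
  ∀ c : ℕ → ℕ, (∀ m, 1 ≤ m → c m ∈ S) →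
    ∃ N1 N2 : ℕ, 0 < N1 ∧ N1 ≤ N2 ∧ N2 ≤ η ∧ (∑ m ∈ Finset.Icc N1 N2, c m) ∈ T

lemma mem_indexSet {k i : ℕ} {f : ℕ → ℝ} :
    i ∈ indexSet k f ↔ i ∈ Icc 1 k ∧ 0 < f i := by
  simp [indexSet]

lemma indexSet_subset {k : ℕ} {f : ℕ → ℝ} : indexSet k f ⊆ Icc 1 k :=
  filter_subset _ _

lemma sum_restrict (k : ℕ) (f z : ℕ → ℝ) (hf : ∀ i, 0 ≤ f i) :
    ∑ i ∈ Icc 1 k, f i * z i = ∑ i ∈ indexSet k f, f i * z i := by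
  refine (Finset.sum_subset indexSet_subset ?_).symm
  intro i hi hni
  have h1 : ¬ 0 < f i := by
    intro h
    exact hni (mem_indexSet.2 ⟨hi, h⟩)
  have : f i = 0 := le_antisymm (not_lt.1 h1) (hf i)
  simp [this]

lemma indexSet_combine (k : ℕ) (f g : ℕ → ℝ) (hf : ∀ i, 0 ≤ f i) (hg : ∀ i, 0 ≤ g i)
    (M : ℝ) (hM : 0 < M) :
    indexSet k (fun i => f i * M + g i) = indexSet k f ∪ indexSet k g := by
  ext i
  simp only [mem_indexSet, mem_union]
  constructor
  · rintro ⟨hi, hpos⟩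
    by_contra hcon
    push_neg at hcon
    have h1 : f i = 0 := le_antisymm (hcon.1 hi) (hf i)
    have h2 : g i = 0 := le_antisymm (hcon.2 hi) (hg i)
    rw [h1, h2] at hpos; simp at hpos
  · rintro (⟨hi, hpos⟩ | ⟨hi, hpos⟩)
    · exact ⟨hi, by nlinarith [hg i]⟩
    · exact ⟨hi, by nlinarith [hf i, mul_nonneg (hf i) hM.le]⟩

def affIter (a b : ℝ) : ℕ → ℝ
  | 0 => 0
  | (m+1) => a * affIter a b m + b

lemma affIter_nonneg {a b : ℝ} (ha : 0 ≤ a) (hb : 0 ≤ b) : ∀ m, 0 ≤ affIter a b m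
  | 0 => le_refl _
  | (m+1) => by
      have := affIter_nonneg ha hb m
      simp only [affIter]; positivity

lemma affIter_mono {a b : ℝ} (ha : 0 ≤ a) (hb : 0 ≤ b) :
    Monotone (affIter a b) := by
  have hstep : ∀ m, affIter a b m ≤ affIter a b (m+1) := by
    intro m
    induction m with
    | zero => simpa [affIter] using hb
    | succ m ih =>
        show affIter a b (m+1) ≤ affIter a b (m+2)
        have ih' : affIter a b m ≤ a * affIter a b m + b := by
          simpa [affIter] using ih
        simp only [affIter]
        nlinarith [mul_le_mul_of_nonneg_left ih' ha]
  exact monotone_nat_of_le_succ hstep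

def chainSums (g : ℕ → ℕ) : ℕ → ℕ
  | 0 => 0
  | (m+1) => chainSums g m + g (chainSums g m)

lemma chainSums_le {g : ℕ → ℕ} {k : ℕ} (hg : ∀ s, g s ≤ k) : ∀ m, chainSums g m ≤ k * m
  | 0 => by simp [chainSums]
  | (m+1) => by
      have := chainSums_le hg m
      have h2 := hg (chainSums g m)
      simp only [chainSums, Nat.mul_succ]
      omega

lemma chainSums_mono {g : ℕ → ℕ} : Monotone (chainSums g) :=
  monotone_nat_of_le_succ fun m => by simp [chainSums]

lemma pow_ge_min {a : ℝ} (ha : 0 < a) {m η : ℕ} (h : m ≤ η) :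
    min (a ^ η) 1 ≤ a ^ m := by
  rcases le_total a 1 with h1 | h1
  · exact le_trans (min_le_left _ _) (pow_le_pow_of_le_one ha.le h1 h)
  · exact le_trans (min_le_right _ _) (one_le_pow₀ h1)

lemma masterLB (k : ℕ) (α A : ℝ) (β γ B C : ℕ → ℝ)
    (hα : 0 ≤ α) (hA : 0 ≤ A)
    (hβ : ∀ i, 0 ≤ β i) (hγ : ∀ i, 0 ≤ γ i) (hB : ∀ j, 0 ≤ B j) (hC : ∀ j, 0 ≤ C j)
    (x y : ℕ → ℝ) (hynn : ∀ n, 0 ≤ y n)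
    (M1 M2 : ℝ) (hM1 : 0 < M1) (hM2 : 0 < M2)
    (hlow : ∀ n, M1 * y n ≤ x n) (hhigh : ∀ n, x n ≤ M2 * y n)
    (hden : ∀ n, k ≤ n →
      0 < A + ∑ j ∈ Icc 1 k, B j * x (n - j) + ∑ j ∈ Icc 1 k, C j * y (n - j))
    (hrec : ∀ n, k ≤ n → x n =
      (α + ∑ i ∈ Icc 1 k, β i * x (n - i) + ∑ i ∈ Icc 1 k, γ i * y (n - i)) /
      (A + ∑ j ∈ Icc 1 k, B j * x (n - j) + ∑ j ∈ Icc 1 k, C j * y (n - j)))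
    (hsub : indexSet k B ∪ indexSet k C ⊆ indexSet k β ∪ indexSet k γ)
    (hAcase : A = 0 ∨ (0 < α ∧ 0 < A)) :
    ∃ μ : ℝ, 0 < μ ∧ ∀ n, k ≤ n → μ ≤ x n := by
  have hxnn : ∀ n, 0 ≤ x n := fun n => le_trans (mul_nonneg hM1.le (hynn n)) (hlow n)
  set w' : ℕ → ℝ := fun j => B j * M2 + C j with hw'
  have hw'nn : ∀ j, 0 ≤ w' j := fun j => by
    have := hB j; have := hC j; positivity
  have hJ'eq : indexSet k w' = indexSet k B ∪ indexSet k C :=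
    indexSet_combine k B C hB hC M2 hM2
  rcases (indexSet k w').eq_empty_or_nonempty with hJ' | hJ'
  · -- all B, C vanish on Icc 1 k
    have hzero : ∀ j ∈ Icc 1 k, B j = 0 ∧ C j = 0 := by
      intro j hj
      have h1 : ¬ (0 < w' j) := fun h => by
        rw [eq_empty_iff_forall_notMem] at hJ'
        exact hJ' j (mem_indexSet.2 ⟨hj, h⟩)
      have h2 : w' j = 0 := le_antisymm (not_lt.1 h1) (hw'nn j)
      have h2' : B j * M2 + C j = 0 := h2
      constructor
      · nlinarith [hB j, hC j, mul_nonneg (hB j) hM2.le]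
      · nlinarith [hB j, hC j, mul_nonneg (hB j) hM2.le]
    have hsum0 : ∀ n : ℕ, (∑ j ∈ Icc 1 k, B j * x (n - j)) = 0 ∧
        (∑ j ∈ Icc 1 k, C j * y (n - j)) = 0 := by
      intro n
      constructor
      · exact Finset.sum_eq_zero fun j hj => by rw [(hzero j hj).1, zero_mul]
      · exact Finset.sum_eq_zero fun j hj => by rw [(hzero j hj).2, zero_mul]
    have hApos : 0 < A := by
      rcases hAcase with h0 | ⟨_, h⟩
      · exfalso
        have := hden k le_rfl
        rw [(hsum0 k).1, (hsum0 k).2, h0] at this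
        simp at this
      · exact h
    have hαpos : 0 < α := by
      rcases hAcase with h0 | ⟨h, _⟩
      · exfalso; rw [h0] at hApos; exact lt_irrefl 0 hApos
      · exact h
    refine ⟨α / A, div_pos hαpos hApos, fun n hn => ?_⟩
    rw [hrec n hn, (hsum0 n).1, (hsum0 n).2, add_zero, add_zero]
    have hnum : α ≤ α + ∑ i ∈ Icc 1 k, β i * x (n - i) + ∑ i ∈ Icc 1 k, γ i * y (n - i) := by
      have h1 : 0 ≤ ∑ i ∈ Icc 1 k, β i * x (n - i) :=
        Finset.sum_nonneg fun i _ => mul_nonneg (hβ i) (hxnn _)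
      have h2 : 0 ≤ ∑ i ∈ Icc 1 k, γ i * y (n - i) :=
        Finset.sum_nonneg fun i _ => mul_nonneg (hγ i) (hynn _)
      linarith
    exact (div_le_div_iff_of_pos_right hApos).mpr hnum
  · obtain ⟨j₁, hj₁mem, hj₁eq⟩ :=
      Finset.exists_mem_eq_inf' hJ' (fun j => β j * M1 + γ j)
    set cbar := (indexSet k w').inf' hJ' (fun j => β j * M1 + γ j) with hcbardef
    have hcbar : 0 < cbar := by
      have hj₁' : j₁ ∈ indexSet k β ∪ indexSet k γ := hsub (hJ'eq ▸ hj₁mem)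
      rw [hj₁eq]
      rcases mem_union.1 hj₁' with h | h
      · have := (mem_indexSet.1 h).2
        nlinarith [hγ j₁]
      · have := (mem_indexSet.1 h).2
        nlinarith [hβ j₁, mul_nonneg (hβ j₁) hM1.le]
    set Ebar := ∑ j ∈ indexSet k w', w' j with hEdef
    have hEbar : 0 < Ebar :=
      Finset.sum_pos (fun j hj => (mem_indexSet.1 hj).2) hJ'
    obtain ⟨μ, hμpos, hμA, hμE⟩ :
        ∃ μ : ℝ, 0 < μ ∧ μ * A ≤ α ∧ μ * Ebar ≤ cbar := by
      rcases hAcase with h0 | ⟨hα0, hA0⟩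
      · exact ⟨cbar / Ebar, div_pos hcbar hEbar, by rw [h0, mul_zero]; exact hα,
          by rw [div_mul_cancel₀ _ (ne_of_gt hEbar)]⟩
      · refine ⟨min (α / A) (cbar / Ebar), lt_min (div_pos hα0 hA0) (div_pos hcbar hEbar),
          ?_, ?_⟩
        · calc min (α / A) (cbar / Ebar) * A ≤ (α / A) * A :=
                mul_le_mul_of_nonneg_right (min_le_left _ _) hA
            _ = α := div_mul_cancel₀ _ (ne_of_gt hA0)
        · calc min (α / A) (cbar / Ebar) * Ebar ≤ (cbar / Ebar) * Ebar :=
                mul_le_mul_of_nonneg_right (min_le_right _ _) hEbar.le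
            _ = cbar := div_mul_cancel₀ _ (ne_of_gt hEbar)
    refine ⟨μ, hμpos, fun n hn => ?_⟩
    obtain ⟨j', hj'mem, hj'max⟩ :=
      Finset.exists_max_image (indexSet k w') (fun j => y (n - j)) hJ'
    set t := y (n - j') with htdef
    have ht0 : 0 ≤ t := hynn _
    -- denominator upper bound
    have hden_ub : A + (∑ j ∈ Icc 1 k, B j * x (n - j)) + ∑ j ∈ Icc 1 k, C j * y (n - j)
        ≤ A + Ebar * t := by
      have h1 : (∑ j ∈ Icc 1 k, B j * x (n - j)) + ∑ j ∈ Icc 1 k, C j * y (n - j)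
          ≤ ∑ j ∈ Icc 1 k, w' j * y (n - j) := by
        rw [← Finset.sum_add_distrib]
        refine Finset.sum_le_sum fun j _ => ?_
        have hx' : B j * x (n - j) ≤ B j * (M2 * y (n - j)) :=
          mul_le_mul_of_nonneg_left (hhigh _) (hB j)
        have : w' j * y (n - j) = B j * (M2 * y (n - j)) + C j * y (n - j) := by
          simp only [hw']; ring
        linarith
      have h2 : (∑ j ∈ Icc 1 k, w' j * y (n - j)) = ∑ j ∈ indexSet k w', w' j * y (n - j) :=
        sum_restrict k w' (fun j => y (n - j)) hw'nn
      have h3 : (∑ j ∈ indexSet k w', w' j * y (n - j)) ≤ Ebar * t := by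
        rw [hEdef, Finset.sum_mul]
        exact Finset.sum_le_sum fun j hj =>
          mul_le_mul_of_nonneg_left (hj'max j hj) (hw'nn j)
      linarith
    -- numerator lower bound
    have hnum_lb : α + cbar * t ≤
        α + (∑ i ∈ Icc 1 k, β i * x (n - i)) + ∑ i ∈ Icc 1 k, γ i * y (n - i) := by
      have hj'Icc : j' ∈ Icc 1 k := indexSet_subset hj'mem
      have h1 : β j' * x (n - j') ≤ ∑ i ∈ Icc 1 k, β i * x (n - i) :=
        Finset.single_le_sum (fun i _ => mul_nonneg (hβ i) (hxnn _)) hj'Icc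
      have h2 : γ j' * y (n - j') ≤ ∑ i ∈ Icc 1 k, γ i * y (n - i) :=
        Finset.single_le_sum (fun i _ => mul_nonneg (hγ i) (hynn _)) hj'Icc
      have h3 : cbar ≤ β j' * M1 + γ j' := Finset.inf'_le _ hj'mem
      have h4 : β j' * (M1 * y (n - j')) ≤ β j' * x (n - j') :=
        mul_le_mul_of_nonneg_left (hlow _) (hβ j')
      have h5 : cbar * t ≤ (β j' * M1 + γ j') * t :=
        mul_le_mul_of_nonneg_right h3 ht0
      nlinarith
    have hDpos := hden n hn
    rw [hrec n hn, le_div_iff₀ hDpos]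
    calc μ * (A + (∑ j ∈ Icc 1 k, B j * x (n - j)) + ∑ j ∈ Icc 1 k, C j * y (n - j))
        ≤ μ * (A + Ebar * t) := mul_le_mul_of_nonneg_left hden_ub hμpos.le
      _ = μ * A + (μ * Ebar) * t := by ring
      _ ≤ α + cbar * t := by
          have := mul_le_mul_of_nonneg_right hμE ht0
          linarith
      _ ≤ _ := hnum_lb

set_option maxHeartbeats 2000000 in
lemma mainBound (k : ℕ) (hk : 0 < k) (p : ℝ) (δ ε D E : ℕ → ℝ)
    (hp : 0 ≤ p)
    (hδ : ∀ i, 0 ≤ δ i) (hε : ∀ i, 0 ≤ ε i) (hD : ∀ j, 0 ≤ D j) (hE : ∀ j, 0 ≤ E j)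
    (x y : ℕ → ℝ) (hynn : ∀ n, 0 ≤ y n)
    (M1 M2 : ℝ) (hM1 : 0 < M1) (hM2 : 0 < M2)
    (hlow : ∀ n, M1 * y n ≤ x n) (hhigh : ∀ n, x n ≤ M2 * y n)
    (hyden : ∀ n, k ≤ n →
      0 < ∑ j ∈ Icc 1 k, D j * x (n - j) + ∑ j ∈ Icc 1 k, E j * y (n - j))
    (hyrec : ∀ n, k ≤ n → y n =
      (p + ∑ i ∈ Icc 1 k, δ i * x (n - i) + ∑ i ∈ Icc 1 k, ε i * y (n - i)) /
      (∑ j ∈ Icc 1 k, D j * x (n - j) + ∑ j ∈ Icc 1 k, E j * y (n - j)))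
    (μ : ℝ) (hμ : 0 < μ) (hylb : ∀ n, k ≤ n → μ ≤ y n)
    (hJne0 : (indexSet k D ∪ indexSet k E).Nonempty)
    (η : ℕ) (hηpos : 0 < η)
    (hiter : iterCond η (indexSet k δ ∪ indexSet k ε) (indexSet k D ∪ indexSet k E)) :
    ∃ M : ℝ, 0 < M ∧ ∃ N : ℕ, ∀ n, N < n → x n ≤ M ∧ y n ≤ M := by
  classical
  have hxnn : ∀ n, 0 ≤ x n := fun n => le_trans (mul_nonneg hM1.le (hynn n)) (hlow n)
  set v : ℕ → ℝ := fun j => D j * M1 + E j with hvdef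
  have hvnn : ∀ j, 0 ≤ v j := fun j => by
    have := hD j; have := hE j; have := mul_nonneg (hD j) hM1.le
    simp only [hvdef]; linarith
  have hJeq : indexSet k v = indexSet k D ∪ indexSet k E :=
    indexSet_combine k D E hD hE M1 hM1
  have hJne : (indexSet k v).Nonempty := by rw [hJeq]; exact hJne0
  set d := (indexSet k v).inf' hJne v with hddef
  have hd_le : ∀ s ∈ indexSet k v, d ≤ v s := fun s hs => Finset.inf'_le _ hs
  have hd : 0 < d := by
    obtain ⟨j₁, hj₁, hj₁eq⟩ := Finset.exists_mem_eq_inf' hJne v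
    rw [hddef, hj₁eq]
    have hj₁' : j₁ ∈ indexSet k D ∪ indexSet k E := hJeq ▸ hj₁
    show (0:ℝ) < D j₁ * M1 + E j₁
    rcases mem_union.1 hj₁' with h | h
    · have := (mem_indexSet.1 h).2
      have := hE j₁; nlinarith
    · have := (mem_indexSet.1 h).2
      have := mul_nonneg (hD j₁) hM1.le; nlinarith
  obtain ⟨j₀, hj₀⟩ := hJne
  have hj₀Icc : j₀ ∈ Icc 1 k := indexSet_subset hj₀
  -- single-term lower bound for the denominator
  have hden_single : ∀ n : ℕ, ∀ s ∈ Icc 1 k,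
      v s * y (n - s) ≤ ∑ j ∈ Icc 1 k, D j * x (n - j) + ∑ j ∈ Icc 1 k, E j * y (n - j) := by
    intro n s hs
    have h1 : D s * x (n - s) ≤ ∑ j ∈ Icc 1 k, D j * x (n - j) :=
      Finset.single_le_sum (fun j _ => mul_nonneg (hD j) (hxnn _)) hs
    have h2 : E s * y (n - s) ≤ ∑ j ∈ Icc 1 k, E j * y (n - j) :=
      Finset.single_le_sum (fun j _ => mul_nonneg (hE j) (hynn _)) hs
    have h3 : D s * (M1 * y (n - s)) ≤ D s * x (n - s) :=
      mul_le_mul_of_nonneg_left (hlow _) (hD s)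
    have : v s * y (n - s) = D s * (M1 * y (n - s)) + E s * y (n - s) := by
      simp only [hvdef]; ring
    linarith
  set w : ℕ → ℝ := fun i => δ i * M2 + ε i with hwdef
  have hwnn : ∀ i, 0 ≤ w i := fun i => by
    have := hδ i; have := hε i; have := mul_nonneg (hδ i) hM2.le
    simp only [hwdef]; linarith
  have hIeq : indexSet k w = indexSet k δ ∪ indexSet k ε :=
    indexSet_combine k δ ε hδ hε M2 hM2
  -- numerator upper bound
  have hnum_ub : ∀ n : ℕ,
      p + ∑ i ∈ Icc 1 k, δ i * x (n - i) + ∑ i ∈ Icc 1 k, ε i * y (n - i)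
        ≤ p + ∑ i ∈ indexSet k w, w i * y (n - i) := by
    intro n
    have h1 : (∑ i ∈ Icc 1 k, δ i * x (n - i)) + ∑ i ∈ Icc 1 k, ε i * y (n - i)
        ≤ ∑ i ∈ Icc 1 k, w i * y (n - i) := by
      rw [← Finset.sum_add_distrib]
      refine Finset.sum_le_sum fun i _ => ?_
      have hx' : δ i * x (n - i) ≤ δ i * (M2 * y (n - i)) :=
        mul_le_mul_of_nonneg_left (hhigh _) (hδ i)
      have : w i * y (n - i) = δ i * (M2 * y (n - i)) + ε i * y (n - i) := by
        simp only [hwdef]; ring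
      linarith
    have h2 : (∑ i ∈ Icc 1 k, w i * y (n - i)) = ∑ i ∈ indexSet k w, w i * y (n - i) :=
      sum_restrict k w (fun i => y (n - i)) hwnn
    linarith
  -- the key product inequality
  have hprod : ∀ t : ℕ, k ≤ t → ∀ s ∈ Icc 1 k,
      (v s * y (t - s)) * y t ≤ p + ∑ i ∈ indexSet k w, w i * y (t - i) := by
    intro t ht s hs
    have hDpos := hyden t ht
    have hyD : y t * (∑ j ∈ Icc 1 k, D j * x (t - j) + ∑ j ∈ Icc 1 k, E j * y (t - j))
        = p + ∑ i ∈ Icc 1 k, δ i * x (t - i) + ∑ i ∈ Icc 1 k, ε i * y (t - i) := by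
      rw [hyrec t ht, div_mul_cancel₀ _ (ne_of_gt hDpos)]
    have h1 := hden_single t s hs
    have h2 : (v s * y (t - s)) * y t
        ≤ (∑ j ∈ Icc 1 k, D j * x (t - j) + ∑ j ∈ Icc 1 k, E j * y (t - j)) * y t :=
      mul_le_mul_of_nonneg_right h1 (hynn t)
    have h3 := hnum_ub t
    nlinarith
  rcases (indexSet k w).eq_empty_or_nonempty with hIe | hIne
  · -- numerator is constantly p : direct bound
    set P := p / (d * μ) with hPdef
    have hPnn : 0 ≤ P := div_nonneg hp (by positivity)
    refine ⟨M2 * P + P + 1, by positivity, 2 * k, fun n hn => ?_⟩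
    have hn2k : 2 * k ≤ n := le_of_lt hn
    have hnk : k ≤ n := by omega
    have hDpos := hyden n hnk
    have hylbn : μ ≤ y (n - j₀) := by
      apply hylb
      have := (mem_Icc.1 hj₀Icc).2
      omega
    have hden_lb : d * μ ≤ ∑ j ∈ Icc 1 k, D j * x (n - j) + ∑ j ∈ Icc 1 k, E j * y (n - j) := by
      have h1 := hden_single n j₀ hj₀Icc
      have h2 : d * μ ≤ v j₀ * y (n - j₀) :=
        mul_le_mul (hd_le j₀ hj₀) hylbn hμ.le (hvnn j₀)
      linarith
    have hnum : p + ∑ i ∈ Icc 1 k, δ i * x (n - i) + ∑ i ∈ Icc 1 k, ε i * y (n - i) ≤ p := by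
      have := hnum_ub n
      rw [hIe] at this
      simpa using this
    have hyP : y n ≤ P := by
      have hyD : y n * (∑ j ∈ Icc 1 k, D j * x (n - j) + ∑ j ∈ Icc 1 k, E j * y (n - j))
          = p + ∑ i ∈ Icc 1 k, δ i * x (n - i) + ∑ i ∈ Icc 1 k, ε i * y (n - i) := by
        rw [hyrec n hnk, div_mul_cancel₀ _ (ne_of_gt hDpos)]
      have h4 : y n * (d * μ) ≤ p := by
        nlinarith [mul_le_mul_of_nonneg_left hden_lb (hynn n)]
      rw [hPdef, le_div_iff₀ (by positivity : (0:ℝ) < d * μ)]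
      linarith
    constructor
    · have := hhigh n
      nlinarith [hynn n]
    · nlinarith [mul_nonneg hM2.le hPnn]
  · -- main case
    have hK : 0 < ∑ i ∈ indexSet k w, w i :=
      Finset.sum_pos (fun i hi => (mem_indexSet.1 hi).2) hIne
    set K := ∑ i ∈ indexSet k w, w i with hKdef
    by_contra hcon
    push_neg at hcon
    have hub : ∀ R' : ℝ, 0 < R' → ∀ N : ℕ, ∃ n, N < n ∧ R' < y n := by
      intro R' hR' N
      obtain ⟨n, hn, himp⟩ := hcon (M2 * R' + R') (by positivity) N
      refine ⟨n, hn, ?_⟩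
      by_cases hx : x n ≤ M2 * R' + R'
      · have := himp hx
        nlinarith
      · push_neg at hx
        have := hhigh n
        nlinarith
    set a := d * μ / K with hadef
    set b := p / K with hbdef
    have ha : 0 < a := by positivity
    have hb : 0 ≤ b := by positivity
    have hKa : K * a = d * μ := by
      rw [hadef]; field_simp
    have hKb : K * b = p := by
      rw [hbdef]; field_simp
    set Cη := affIter a b η with hCdef
    have hCnn : 0 ≤ Cη := affIter_nonneg ha.le hb η
    set a₀ := min (a ^ η) 1 with ha₀def
    have ha₀ : 0 < a₀ := lt_min (by positivity) one_pos
    set R₀ := max 1 (max ((Cη + 1) / a₀) ((2 * d * a₀ * Cη + K + p + 1) / (d * a₀ ^ 2)))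
      with hR₀def
    set N₀ := k * η + 2 * k with hN₀def
    set Q := (Finset.range (N₀ + 1)).sup' (nonempty_range_iff.2 (Nat.succ_ne_zero _)) y
      with hQdef
    set G := max R₀ (1 + Q) with hGdef
    have hR₀1 : (1:ℝ) ≤ R₀ := le_max_left _ _
    have hG0 : 0 < G := lt_of_lt_of_le one_pos (le_trans hR₀1 (le_max_left _ _))
    obtain ⟨n₁, _, hn₁⟩ := hub G hG0 0
    have hex : ∃ n, G ≤ y n := ⟨n₁, hn₁.le⟩
    obtain ⟨nstar, hGR, hrecord0⟩ : ∃ n, G ≤ y n ∧ ∀ l, l < n → y l < G :=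
      ⟨Nat.find hex, Nat.find_spec hex, fun l hl => not_le.1 (Nat.find_min hex hl)⟩
    set R := y nstar with hRdef
    have hrecord : ∀ l, l < nstar → y l ≤ R := fun l hl =>
      le_trans (hrecord0 l hl).le hGR
    have hN₀lt : N₀ < nstar := by
      by_contra h
      push_neg at h
      have h1 : y nstar ≤ Q := Finset.le_sup' y (mem_range.2 (by omega))
      have h2 : 1 + Q ≤ G := le_max_right _ _
      linarith
    have hR0 : (0:ℝ) ≤ R := hynn _
    have hRR₀ : R₀ ≤ R := le_trans (le_max_left _ _) hGR
    have hR1 : (1:ℝ) ≤ R := le_trans hR₀1 hRR₀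
    -- the greedy choice function
    have hgex : ∀ s : ℕ, ∃ i, i ∈ indexSet k w ∧
        ∀ i' ∈ indexSet k w, y (nstar - s - i') ≤ y (nstar - s - i) := by
      intro s
      obtain ⟨i, hi, hmax⟩ :=
        Finset.exists_max_image (indexSet k w) (fun i => y (nstar - s - i)) hIne
      exact ⟨i, hi, hmax⟩
    choose g hgmem hgmax using hgex
    have hgk : ∀ s, g s ≤ k := fun s => (mem_Icc.1 (indexSet_subset (hgmem s))).2
    have hg1 : ∀ s, 1 ≤ g s := fun s => (mem_Icc.1 (indexSet_subset (hgmem s))).1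
    set f := chainSums g with hfdef
    have hfk : ∀ m, f m ≤ k * m := chainSums_le hgk
    set c : ℕ → ℕ := fun m => g (f (m - 1)) with hcdef
    have hcS : ∀ m, 1 ≤ m → c m ∈ indexSet k δ ∪ indexSet k ε := fun m _ =>
      hIeq ▸ hgmem (f (m - 1))
    have htel : ∀ N, (∑ m ∈ Icc 1 N, c m) = f N := by
      intro N
      induction N with
      | zero => simp [hfdef, chainSums]
      | succ N ih =>
          rw [Finset.sum_Icc_succ_top (Nat.succ_le_succ (Nat.zero_le _)), ih]
          have : c (N + 1) = g (f N) := by simp [hcdef]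
          rw [this]
          simp [hfdef, chainSums]
    obtain ⟨N1, N2, hN1, hN12, hN2η, hσmem⟩ := hiter c hcS
    rw [← hJeq] at hσmem
    have hfsum : f (N1 - 1) + (∑ m ∈ Icc N1 N2, c m) = f N2 := by
      have e1 : Icc 1 (N1 - 1) = Ioc 0 (N1 - 1) := Finset.Icc_add_one_left_eq_Ioc 0 _
      have e2 : Icc N1 N2 = Ioc (N1 - 1) N2 := by
        rw [show N1 = N1 - 1 + 1 by omega]
        exact Finset.Icc_add_one_left_eq_Ioc _ _
      have e4 : Icc 1 N2 = Ioc 0 N2 := Finset.Icc_add_one_left_eq_Ioc 0 _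
      have e3 := Finset.sum_Ioc_consecutive c (Nat.zero_le (N1 - 1))
        (by omega : N1 - 1 ≤ N2)
      rw [← e1, ← e2, ← e4, htel, htel] at e3
      exact e3
    -- chain of large values
    have hchain : ∀ m, m ≤ η → a ^ m * R - affIter a b m ≤ y (nstar - f m) := by
      intro m
      induction m with
      | zero =>
          intro _
          simp [hfdef, chainSums, affIter, hRdef]
      | succ m ih =>
          intro hmη
          have hm : m ≤ η := by omega
          have IH := ih hm
          have hfm : f m ≤ k * m := hfk m
          have ht2k : 2 * k ≤ nstar - f m := by
            have : f m ≤ k * η := le_trans hfm (Nat.mul_le_mul_left k hm)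
            omega
          have htk : k ≤ nstar - f m := by omega
          -- product inequality at t with s = j₀
          have h1 := hprod (nstar - f m) htk j₀ hj₀Icc
          have hylbt : μ ≤ y (nstar - f m - j₀) := by
            apply hylb
            have := (mem_Icc.1 hj₀Icc).2
            omega
          have h2 : d * μ ≤ v j₀ * y (nstar - f m - j₀) :=
            mul_le_mul (hd_le j₀ hj₀) hylbt hμ.le (hvnn j₀)
          have h3 : (d * μ) * y (nstar - f m)
              ≤ p + ∑ i ∈ indexSet k w, w i * y (nstar - f m - i) := by
            nlinarith [hynn (nstar - f m), mul_le_mul_of_nonneg_right h2 (hynn (nstar - f m))]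
          have h4 : (∑ i ∈ indexSet k w, w i * y (nstar - f m - i))
              ≤ K * y (nstar - f m - g (f m)) := by
            rw [hKdef, Finset.sum_mul]
            exact Finset.sum_le_sum fun i hi =>
              mul_le_mul_of_nonneg_left (hgmax (f m) i hi) (hwnn i)
          have h5 : a * y (nstar - f m) - b ≤ y (nstar - f m - g (f m)) := by
            have h6 : K * (a * y (nstar - f m) - b) ≤ K * y (nstar - f m - g (f m)) := by
              have : K * (a * y (nstar - f m) - b) = (K * a) * y (nstar - f m) - K * b := by
                ring
              rw [this, hKa, hKb]
              linarith
            exact le_of_mul_le_mul_left h6 hK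
          have h7 : nstar - f m - g (f m) = nstar - f (m + 1) := by
            rw [Nat.sub_sub]
            congr 1
          have h8 : a * (a ^ m * R - affIter a b m) - b ≤ a * y (nstar - f m) - b := by
            nlinarith [mul_le_mul_of_nonneg_left IH ha.le]
          have h9 : a ^ (m + 1) * R - affIter a b (m + 1)
              = a * (a ^ m * R - affIter a b m) - b := by
            simp only [affIter, pow_succ]
            ring
          rw [h9, ← h7]
          linarith
    -- the two large values
    have hu_all : ∀ m, m ≤ η → a₀ * R - Cη ≤ y (nstar - f m) := by
      intro m hm
      have h1 := hchain m hm
      have h2 : a₀ ≤ a ^ m := pow_ge_min ha hm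
      have h3 : affIter a b m ≤ Cη := affIter_mono ha.le hb hm
      nlinarith [mul_le_mul_of_nonneg_right h2 hR0]
    have hu1 : (1:ℝ) ≤ a₀ * R - Cη := by
      have h1 : (Cη + 1) / a₀ ≤ R₀ := le_trans (le_max_left _ _) (le_max_right _ _)
      have h2 : (Cη + 1) / a₀ ≤ R := le_trans h1 hRR₀
      rw [div_le_iff₀ ha₀] at h2
      nlinarith
    have hσIcc : (∑ m ∈ Icc N1 N2, c m) ∈ Icc 1 k := indexSet_subset hσmem
    have hσk : (∑ m ∈ Icc N1 N2, c m) ≤ k := (mem_Icc.1 hσIcc).2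
    have hσ1 : 1 ≤ ∑ m ∈ Icc N1 N2, c m := (mem_Icc.1 hσIcc).1
    have hfN1 : f (N1 - 1) ≤ k * η :=
      le_trans (hfk _) (Nat.mul_le_mul_left k (by omega))
    have hfN2 : f N2 ≤ k * η := le_trans (hfk _) (Nat.mul_le_mul_left k hN2η)
    have hn'k : k ≤ nstar - f (N1 - 1) := by omega
    -- star inequality at n' = nstar - f (N1-1)
    have hstar := hprod (nstar - f (N1 - 1)) hn'k _ hσIcc
    have hn'σ : nstar - f (N1 - 1) - (∑ m ∈ Icc N1 N2, c m) = nstar - f N2 := by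
      rw [Nat.sub_sub, hfsum]
    have hy1 : a₀ * R - Cη ≤ y (nstar - f (N1 - 1)) := hu_all (N1 - 1) (by omega)
    have hy2 : a₀ * R - Cη ≤ y (nstar - f (N1 - 1) - (∑ m ∈ Icc N1 N2, c m)) := by
      rw [hn'σ]
      exact hu_all N2 hN2η
    have hd_le' : d ≤ v (∑ m ∈ Icc N1 N2, c m) := hd_le _ hσmem
    have hu0 : (0:ℝ) ≤ a₀ * R - Cη := by linarith
    have hLHS : d * ((a₀ * R - Cη) * (a₀ * R - Cη))
        ≤ (v (∑ m ∈ Icc N1 N2, c m) *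
            y (nstar - f (N1 - 1) - (∑ m ∈ Icc N1 N2, c m))) * y (nstar - f (N1 - 1)) := by
      have e1 : d * (a₀ * R - Cη) ≤ v (∑ m ∈ Icc N1 N2, c m) *
          y (nstar - f (N1 - 1) - (∑ m ∈ Icc N1 N2, c m)) :=
        mul_le_mul hd_le' hy2 hu0 (hvnn _)
      have e2 := mul_le_mul e1 hy1 hu0 (mul_nonneg (hvnn _) (hynn _))
      nlinarith [e2]
    -- numerator at n' is at most p + K * R
    have hRHS : (∑ i ∈ indexSet k w, w i * y (nstar - f (N1 - 1) - i)) ≤ K * R := by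
      rw [hKdef, Finset.sum_mul]
      refine Finset.sum_le_sum fun i hi => ?_
      have hi1 : 1 ≤ i := (mem_Icc.1 (indexSet_subset hi)).1
      have hlt : nstar - f (N1 - 1) - i < nstar := by omega
      exact mul_le_mul_of_nonneg_left (hrecord _ hlt) (hwnn i)
    have hfinal : d * ((a₀ * R - Cη) * (a₀ * R - Cη)) ≤ p + K * R := by
      calc d * ((a₀ * R - Cη) * (a₀ * R - Cη)) ≤ _ := hLHS
        _ ≤ p + ∑ i ∈ indexSet k w, w i * y (nstar - f (N1 - 1) - i) := hstar
        _ ≤ p + K * R := by linarith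
    -- contradiction
    have hbig : 2 * d * a₀ * Cη + K + p + 1 ≤ d * a₀ ^ 2 * R := by
      have h1 : (2 * d * a₀ * Cη + K + p + 1) / (d * a₀ ^ 2) ≤ R₀ :=
        le_trans (le_max_right _ _) (le_max_right _ _)
      have h2 := le_trans h1 hRR₀
      rw [div_le_iff₀ (by positivity : (0:ℝ) < d * a₀ ^ 2)] at h2
      linarith
    have hcontra : p + K * R + 1 ≤ p + K * R := by
      have h1 : (2 * d * a₀ * Cη + K + p + 1) * R ≤ (d * a₀ ^ 2 * R) * R :=
        mul_le_mul_of_nonneg_right hbig hR0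
      nlinarith [mul_nonneg hd.le (sq_nonneg Cη), mul_nonneg (by linarith : (0:ℝ) ≤ p + 1)
        (by linarith : (0:ℝ) ≤ R - 1), hfinal]
    linarith

theorem stmt_3
    (k : ℕ) (hk : 0 < k)
    (α A p q : ℝ) (β γ B C δ ε D E : ℕ → ℝ)
    (hα : 0 ≤ α) (hA : 0 ≤ A) (hp : 0 ≤ p) (hq : 0 ≤ q)
    (hβ : ∀ i, 0 ≤ β i) (hγ : ∀ i, 0 ≤ γ i) (hB : ∀ j, 0 ≤ B j) (hC : ∀ j, 0 ≤ C j)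
    (hδ : ∀ i, 0 ≤ δ i) (hε : ∀ i, 0 ≤ ε i) (hD : ∀ j, 0 ≤ D j) (hE : ∀ j, 0 ≤ E j)
    (x y : ℕ → ℝ)
    (hxnn : ∀ n, 0 ≤ x n) (hynn : ∀ n, 0 ≤ y n)
    (hxden : ∀ n, k ≤ n →
      0 < A + ∑ j ∈ Icc 1 k, B j * x (n - j) + ∑ j ∈ Icc 1 k, C j * y (n - j))
    (hyden : ∀ n, k ≤ n →
      0 < q + ∑ j ∈ Icc 1 k, D j * x (n - j) + ∑ j ∈ Icc 1 k, E j * y (n - j))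
    (hxrec : ∀ n, k ≤ n → x n =
      (α + ∑ i ∈ Icc 1 k, β i * x (n - i) + ∑ i ∈ Icc 1 k, γ i * y (n - i)) /
      (A + ∑ j ∈ Icc 1 k, B j * x (n - j) + ∑ j ∈ Icc 1 k, C j * y (n - j)))
    (hyrec : ∀ n, k ≤ n → y n =
      (p + ∑ i ∈ Icc 1 k, δ i * x (n - i) + ∑ i ∈ Icc 1 k, ε i * y (n - i)) /
      (q + ∑ j ∈ Icc 1 k, D j * x (n - j) + ∑ j ∈ Icc 1 k, E j * y (n - j)))
    (M1 M2 : ℝ) (hM1 : 0 < M1) (hM2 : 0 < M2)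
    (hcmp : ∀ n, M1 * y n ≤ x n ∧ x n ≤ M2 * y n)
    (hq0 : q = 0)
    (hcase :
      (A = 0 ∧ indexSet k B ∪ indexSet k C ⊆ indexSet k β ∪ indexSet k γ ∧
        indexSet k D ≠ ∅) ∨
      (0 < α ∧ 0 < A ∧ indexSet k B ∪ indexSet k C ⊆ indexSet k β ∪ indexSet k γ ∧
        indexSet k D ≠ ∅) ∨
      (indexSet k D ∪ indexSet k E ⊆ indexSet k δ ∪ indexSet k ε ∧ indexSet k E ≠ ∅))
    (hη : ∃ η : ℕ, 0 < η ∧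
      iterCond η (indexSet k δ ∪ indexSet k ε) (indexSet k D ∪ indexSet k E)) :
    ∃ M : ℝ, 0 < M ∧ ∃ N : ℕ, ∀ n, N < n → x n ≤ M ∧ y n ≤ M := by
  subst hq0
  simp only [zero_add] at hyden hyrec
  obtain ⟨η, hηpos, hiter⟩ := hη
  have hlow : ∀ n, M1 * y n ≤ x n := fun n => (hcmp n).1
  have hhigh : ∀ n, x n ≤ M2 * y n := fun n => (hcmp n).2
  have hylow : ∀ n, (1 / M2) * x n ≤ y n := by
    intro n
    have h2 : (1 / M2) * (M2 * y n) = y n := by field_simp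
    have h3 := mul_le_mul_of_nonneg_left (hhigh n) (by positivity : (0:ℝ) ≤ 1 / M2)
    linarith
  have hyhigh : ∀ n, y n ≤ (1 / M1) * x n := by
    intro n
    have h2 : (1 / M1) * (M1 * y n) = y n := by field_simp
    have h3 := mul_le_mul_of_nonneg_left (hlow n) (by positivity : (0:ℝ) ≤ 1 / M1)
    linarith
  obtain ⟨μ, hμ, hylb⟩ : ∃ μ : ℝ, 0 < μ ∧ ∀ n, k ≤ n → μ ≤ y n := by
    rcases hcase with ⟨hA0, hsub, _⟩ | ⟨hα0, hA0, hsub, _⟩ | ⟨hsub, _⟩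
    · obtain ⟨μx, hμx, hxlb⟩ := masterLB k α A β γ B C hα hA hβ hγ hB hC x y hynn
        M1 M2 hM1 hM2 hlow hhigh hxden hxrec hsub (Or.inl hA0)
      refine ⟨μx / M2, by positivity, fun n hn => ?_⟩
      have h1 := hxlb n hn
      have h2 := hhigh n
      rw [div_le_iff₀ hM2]
      nlinarith
    · obtain ⟨μx, hμx, hxlb⟩ := masterLB k α A β γ B C hα hA hβ hγ hB hC x y hynn
        M1 M2 hM1 hM2 hlow hhigh hxden hxrec hsub (Or.inr ⟨hα0, hA0⟩)
      refine ⟨μx / M2, by positivity, fun n hn => ?_⟩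
      have h1 := hxlb n hn
      have h2 := hhigh n
      rw [div_le_iff₀ hM2]
      nlinarith
    · refine masterLB k p 0 ε δ E D hp le_rfl hε hδ hE hD y x hxnn
        (1 / M2) (1 / M1) (by positivity) (by positivity) hylow hyhigh ?_ ?_ ?_ (Or.inl rfl)
      · intro n hn
        have := hyden n hn
        rw [zero_add]
        linarith
      · intro n hn
        rw [hyrec n hn, zero_add]
        ring
      · intro i hi
        have h1 : i ∈ indexSet k D ∪ indexSet k E := by
          rw [Finset.union_comm]; exact hi
        have h2 := hsub h1
        rw [Finset.union_comm]
        exact h2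
  have hJne : (indexSet k D ∪ indexSet k E).Nonempty := by
    rcases hcase with ⟨_, _, hDne⟩ | ⟨_, _, _, hDne⟩ | ⟨_, hEne⟩
    · obtain ⟨j, hj⟩ := Finset.nonempty_iff_ne_empty.2 hDne
      exact ⟨j, mem_union_left _ hj⟩
    · obtain ⟨j, hj⟩ := Finset.nonempty_iff_ne_empty.2 hDne
      exact ⟨j, mem_union_left _ hj⟩
    · obtain ⟨j, hj⟩ := Finset.nonempty_iff_ne_empty.2 hEne
      exact ⟨j, mem_union_right _ hj⟩
  exact mainBound k hk p δ ε D E hp hδ hε hD hE x y hynn M1 M2 hM1 hM2 hlow hhigh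
    hyden hyrec μ hμ hylb hJne η hηpos hiter
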